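/- arXiv:2603.03070 — 2 statements merged into one kernel-verified Lean document; each statement's English description precedes it below -/
import Mathlib

section
/- The polynomial Θ₁(x) = x(3x−4)(5x−9) + (5/36)(3x−5)(11x/4 + 151/60)² has exactly one root in the closed interval [5/3, 9/5]. -/
noncomputable def f (x : ℝ) : ℝ := x*(3*x-4)*(5*x-9) + (5/36)*(3*x-5)*(11*x/4 + 151/60)^2

lemma f_mono : StrictMonoOn f (Set.Icc (5/3 : ℝ) (9/5)) := by
  intro a ha b hb hab
  simp only [Set.mem_Icc] at ha hb
  unfold f
  nlinarith [sq_nonneg (a+b), sq_nonneg (a-b), sq_nonneg (a+b-3), mul_pos (sub_pos.2 hab) (sub_pos.2 hab), ha.1, hb.2, sq_nonneg a, sq_nonneg b]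

theorem theta1_unique_root :
    ∃! x : ℝ, x ∈ Set.Icc (5/3 : ℝ) (9/5) ∧
      x*(3*x-4)*(5*x-9) + (5/36)*(3*x-5)*(11*x/4 + 151/60)^2 = 0 := by
  have hcont : ContinuousOn f (Set.Icc (5/3 : ℝ) (9/5)) := by
    unfold f; fun_prop
  have hle : (5/3 : ℝ) ≤ 9/5 := by norm_num
  have hmem : (0:ℝ) ∈ Set.Icc (f (5/3)) (f (9/5)) := by
    constructor <;> (unfold f; norm_num)
  obtain ⟨x, hx, hfx⟩ := intermediate_value_Icc hle hcont hmem
  refine ⟨x, ⟨hx, hfx⟩, ?_⟩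
  rintro y ⟨hy, hfy⟩
  exact f_mono.injOn hy hx (by rw [hfx]; exact hfy)
end

section
/- For every real number w with w ≥ 5/3, if S_max satisfies 5/3 < S_max ≤ 9/5 and S_max(3S_max−4)(3S_max−5)(5S_max−9) + (5/4)(S_max−w)²((11/4)S_max + (19/4)w − 27/5)² ≥ 0, and additionally w ≤ S_max, then S_max ≥ (108w(3w−4) + 5w((19/4)w − 9/20)²) / (60w(3w−4) + 5((19/4)w − 9/20)²). -/
theorem Smax_lower_bound (w Smax : ℝ) (hw : 5/3 ≤ w) (h1 : 5/3 < Smax) (h2 : Smax ≤ 9/5)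
    (hwS : w ≤ Smax)
    (hineq : 0 ≤ Smax*(3*Smax-4)*(3*Smax-5)*(5*Smax-9)
        + (5/4)*(Smax-w)^2*((11/4)*Smax + (19/4)*w - 27/5)^2) :
    Smax ≥ (108*w*(3*w-4) + 5*w*((19/4)*w - 9/20)^2)
        / (60*w*(3*w-4) + 5*((19/4)*w - 9/20)^2) := by
  obtain ⟨Q, hQdef⟩ : ∃ Q : ℝ, Q = (11/4)*Smax + (19/4)*w - 27/5 := ⟨_, rfl⟩
  obtain ⟨R, hRdef⟩ : ∃ R : ℝ, R = (19/4)*w - 9/20 := ⟨_, rfl⟩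
  rw [← hQdef] at hineq
  rw [show ((19:ℝ)/4)*w - 9/20 = R from hRdef.symm]
  have hQ : 0 ≤ Q := by rw [hQdef]; nlinarith
  have hRQ : Q ≤ R := by rw [hQdef, hRdef]; nlinarith
  have hD : 0 < 60*w*(3*w-4) + 5*R^2 := by
    have : (0:ℝ) < w*(3*w-4) := by nlinarith
    nlinarith [sq_nonneg R]
  have t1 : 0 ≤ (9-5*Smax)*(3*Smax-5)*(Smax-w)*(3*Smax+3*w-4) := by
    have a1 : (0:ℝ) ≤ 9-5*Smax := by linarith
    have a2 : (0:ℝ) ≤ 3*Smax-5 := by linarith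
    have a3 : (0:ℝ) ≤ Smax-w := by linarith
    have a4 : (0:ℝ) ≤ 3*Smax+3*w-4 := by linarith
    positivity
  have t2 : 0 ≤ (Smax-w)*((R-Q)*(R+Q))*(3*Smax-5) := by
    have a3 : (0:ℝ) ≤ Smax-w := by linarith
    have a5 : (0:ℝ) ≤ R-Q := by linarith
    have a6 : (0:ℝ) ≤ R+Q := by linarith
    have a2 : (0:ℝ) ≤ 3*Smax-5 := by linarith
    positivity
  have t3 : 0 ≤ (Smax-w)*Q^2*(3*w-5) := by
    have a3 : (0:ℝ) ≤ Smax-w := by linarith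
    have a7 : (0:ℝ) ≤ 3*w-5 := by linarith
    positivity
  have key : (12*w*(3*w-4)*(5*Smax-9) + 5*(Smax-w)*R^2)*(3*Smax-5)
      = 12*(Smax*(3*Smax-4)*(3*Smax-5)*(5*Smax-9) + (5/4)*(Smax-w)^2*Q^2)
        + 12*((9-5*Smax)*(3*Smax-5)*(Smax-w)*(3*Smax+3*w-4))
        + 5*((Smax-w)*((R-Q)*(R+Q))*(3*Smax-5))
        + 5*((Smax-w)*Q^2*(3*w-5)) := by
    rw [hQdef, hRdef]; ring
  have hE3 : 0 ≤ (12*w*(3*w-4)*(5*Smax-9) + 5*(Smax-w)*R^2)*(3*Smax-5) := by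
    rw [key]; linarith
  have h35 : (0:ℝ) < 3*Smax-5 := by linarith
  have hE : 0 ≤ 12*w*(3*w-4)*(5*Smax-9) + 5*(Smax-w)*R^2 :=
    nonneg_of_mul_nonneg_right (by linarith [hE3] : (0:ℝ) ≤ (3*Smax-5) * (12*w*(3*w-4)*(5*Smax-9) + 5*(Smax-w)*R^2)) h35
  rw [ge_iff_le, div_le_iff₀ hD]
  have id2 : Smax*(60*w*(3*w-4)+5*R^2) - (108*w*(3*w-4)+5*w*R^2)
      = 12*w*(3*w-4)*(5*Smax-9) + 5*(Smax-w)*R^2 := by ring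
  linarith
end
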